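/- Let G=(V,E) be a directed graph on V=[p] containing all self-loops, and let C be a diagonal positive definite p×p matrix. If the graphical continuous Lyapunov model M_{G,C} is generically identifiable, then |E| ≤ p(p+1)/2 − N, where N is the number of unordered pairs {i,j} of vertices i,j ∈ V such that there is no trek between i and j in G. -/

import Mathlib

open Matrix MeasureTheory

/-- A real square matrix is *stable* if every eigenvalue (over `ℂ`) has strictly
negative real part. -/
def IsStableMat {n : Type*} [Fintype n] [DecidableEq n] (M : Matrix n n ℝ) : Prop :=
  ∀ μ ∈ spectrum ℂ (M.map (algebraMap ℝ ℂ)), μ.re < 0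

/-- `M ∈ ℝ^E`: the matrix `M` is supported on the directed graph with edge set `E`,
i.e. `M j i = 0` whenever `(i, j) ∉ E`. -/
def InSupp {n : Type*} (E : Set (n × n)) (M : Matrix n n ℝ) : Prop :=
  ∀ i j : n, (i, j) ∉ E → M j i = 0

/-- The graphical continuous Lyapunov model `M_{G,C}`: positive definite matrices `S`
such that `M * S + S * Mᵀ + C = 0` for some `M ∈ ℝ^E`. -/
def LyapModel {n : Type*} [Fintype n] [DecidableEq n] (E : Set (n × n))
    (C : Matrix n n ℝ) : Set (Matrix n n ℝ) :=
  {S | S.PosDef ∧ ∃ M : Matrix n n ℝ, InSupp E M ∧ M * S + S * Mᵀ + C = 0}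

/-- Global identifiability: no two stable matrices supported on `E` yield the same
solution of the Lyapunov equation.  (Since for stable `M` the Lyapunov equation has a
unique positive definite solution `Σ(M,C)`, this is equivalent to every fiber
`F_{G,C}(M₀)` being the singleton `{M₀}`.) -/
def GloballyIdentifiable {n : Type*} [Fintype n] [DecidableEq n] (E : Set (n × n))
    (C : Matrix n n ℝ) : Prop :=
  ∀ M₁ M₂ : Matrix n n ℝ,
    InSupp E M₁ → IsStableMat M₁ → InSupp E M₂ → IsStableMat M₂ →
    ∀ S : Matrix n n ℝ, S.PosDef →
      M₁ * S + S * M₁ᵀ + C = 0 → M₂ * S + S * M₂ᵀ + C = 0 → M₁ = M₂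

/-- A directed graph is *simple* if it has no 2-cycles between distinct nodes. -/
def IsSimpleDigraph {n : Type*} (E : Set (n × n)) : Prop :=
  ∀ i j : n, i ≠ j → (i, j) ∈ E → (j, i) ∉ E

/-- The fiber `F_{G,C}(M₀)`: all stable matrices supported on `E` whose Lyapunov
solution coincides with that of `M₀`, i.e. some positive definite `S` solves the
Lyapunov equation for both `M₀` and `M`. -/
def Fiber {n : Type*} [Fintype n] [DecidableEq n] (E : Set (n × n))
    (C M₀ : Matrix n n ℝ) : Set (Matrix n n ℝ) :=
  {M | InSupp E M ∧ IsStableMat M ∧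
    ∃ S : Matrix n n ℝ, S.PosDef ∧ M₀ * S + S * M₀ᵀ + C = 0 ∧ M * S + S * Mᵀ + C = 0}

/-- The identification of the coordinate space `ℝ^{|E|}` with the matrices in `ℝ^E`:
the coordinate attached to an edge `(i,j)` is the entry `M j i`. -/
def edgeMatrix {p : ℕ} (E : Finset (Fin p × Fin p)) (f : E → ℝ) :
    Matrix (Fin p) (Fin p) ℝ :=
  fun j i => if h : (i, j) ∈ E then f ⟨(i, j), h⟩ else 0

/-- Generic identifiability: the set of parameter vectors `f ∈ ℝ^{|E|}` whose matrix
is stable but whose fiber is not a singleton is a Lebesgue null set. -/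
def GenericallyIdentifiable {p : ℕ} (E : Finset (Fin p × Fin p))
    (C : Matrix (Fin p) (Fin p) ℝ) : Prop :=
  volume {f : E → ℝ | IsStableMat (edgeMatrix E f) ∧
    Fiber (E : Set (Fin p × Fin p)) C (edgeMatrix E f) ≠ {edgeMatrix E f}} = 0

/-!
Suppose `|E|` exceeds the number `T` of pairs `i ≤ j` joined by a trek. Near `-1`, every
`M ∈ ℝ^E` is strictly dissipative (`M + Mᵀ` negative definite), hence stable, and its Lyapunov
operator `X ↦ M X + X Mᵀ` is injective. That operator preserves the symmetric matrices vanishing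
at pairs without a trek; since `C` is diagonal, `Σ(M, C)` lies in that `T`-dimensional space too.
The linear map `K ↦ K Σ + Σ Kᵀ` from `ℝ^E` to it then has a nonzero kernel element `K`, and
`M + K` is a second point of the fiber of `M`. So non-identifiability holds on a nonempty open set
of parameters, which has positive Lebesgue measure.
-/

section Stability

variable {n : Type*} [Fintype n]

lemma exists_vecMul_eq_smul_of_mem_spectrum [DecidableEq n] {K : Type*} [Field K]
    {A : Matrix n n K} {μ : K} (hμ : μ ∈ spectrum K A) : ∃ v ≠ 0, v ᵥ* A = μ • v := by
  rw [spectrum.mem_iff, Matrix.isUnit_iff_isUnit_det, isUnit_iff_ne_zero, not_not] at hμ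
  obtain ⟨v, hv, hv0⟩ := Matrix.exists_vecMul_eq_zero_iff.mpr hμ
  refine ⟨v, hv, ?_⟩
  rwa [Matrix.vecMul_sub, Algebra.algebraMap_eq_smul_one, Matrix.vecMul_smul, Matrix.vecMul_one,
    sub_eq_zero, eq_comm] at hv0

lemma re_dotProduct_map_mulVec_star (S : Matrix n n ℝ) (v : n → ℂ) :
    (v ⬝ᵥ S.map (algebraMap ℝ ℂ) *ᵥ star v).re =
      (fun i => (v i).re) ⬝ᵥ S *ᵥ (fun i => (v i).re) +
        (fun i => (v i).im) ⬝ᵥ S *ᵥ (fun i => (v i).im) := by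
  simp only [dotProduct, mulVec, Matrix.map_apply, Pi.star_apply, Complex.re_sum, Finset.mul_sum,
    ← Finset.sum_add_distrib]
  refine Finset.sum_congr rfl fun j _ => Finset.sum_congr rfl fun k _ => ?_
  simp only [Complex.mul_re, Complex.mul_im, Complex.star_def, Complex.conj_re, Complex.conj_im,
    Complex.coe_algebraMap, Complex.ofReal_re, Complex.ofReal_im]
  ring

lemma Matrix.PosDef.re_dotProduct_map_mulVec_star_pos {S : Matrix n n ℝ} (hS : S.PosDef)
    {v : n → ℂ} (hv : v ≠ 0) : 0 < (v ⬝ᵥ S.map (algebraMap ℝ ℂ) *ᵥ star v).re := by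
  have hquad (x : n → ℝ) : 0 ≤ x ⬝ᵥ S *ᵥ x := by
    simpa using hS.posSemidef.dotProduct_mulVec_nonneg x
  rw [re_dotProduct_map_mulVec_star]
  by_cases hre : (fun i => (v i).re) = 0
  · have him : (fun i => (v i).im) ≠ 0 := fun him =>
      hv (funext fun i => Complex.ext (congrFun hre i) (congrFun him i))
    simpa using add_lt_add_of_le_of_lt (hquad _) (hS.dotProduct_mulVec_pos him)
  · simpa using add_lt_add_of_lt_of_le (hS.dotProduct_mulVec_pos hre) (hquad _)

theorem isStableMat_of_lyapunov [DecidableEq n] {M S C : Matrix n n ℝ} (hS : S.PosDef)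
    (hC : C.PosDef) (h : M * S + S * Mᵀ + C = 0) : IsStableMat M := by
  intro μ hμ
  obtain ⟨v, hv, hvμ⟩ := exists_vecMul_eq_smul_of_mem_spectrum hμ
  set A := M.map (algebraMap ℝ ℂ)
  have hA : Aᴴ = Aᵀ := by ext i j; simp [A]
  have hvμ' : Aᵀ *ᵥ star v = star μ • star v := by
    rw [← hA, ← Matrix.star_vecMul, hvμ, star_smul]
  have hℂ : A * S.map (algebraMap ℝ ℂ) + S.map (algebraMap ℝ ℂ) * Aᵀ +
      C.map (algebraMap ℝ ℂ) = 0 := by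
    simpa only [map_add, map_mul, map_zero, RingHom.mapMatrix_apply, Matrix.transpose_map] using
      congrArg (algebraMap ℝ ℂ).mapMatrix h
  have key : ((2 * μ.re : ℝ) : ℂ) * (v ⬝ᵥ S.map (algebraMap ℝ ℂ) *ᵥ star v) +
      v ⬝ᵥ C.map (algebraMap ℝ ℂ) *ᵥ star v = 0 := by
    have := congrArg (fun X => v ⬝ᵥ X *ᵥ star v) hℂ
    simp only [Matrix.add_mulVec, dotProduct_add, ← Matrix.mulVec_mulVec, Matrix.zero_mulVec,
      dotProduct_zero] at this
    rw [Matrix.dotProduct_mulVec v A, hvμ, hvμ', Matrix.mulVec_smul, dotProduct_smul,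
      smul_dotProduct, smul_eq_mul, smul_eq_mul, ← add_mul, Complex.star_def, Complex.add_conj]
      at this
    exact this
  have hre := congrArg Complex.re key
  rw [Complex.add_re, Complex.re_ofReal_mul, Complex.zero_re] at hre
  nlinarith [hS.re_dotProduct_map_mulVec_star_pos hv, hC.re_dotProduct_map_mulVec_star_pos hv]

end Stability

section Dissipative

variable {n : Type*} [Fintype n]

def IsStrictlyDissipative (M : Matrix n n ℝ) : Prop :=
  ∀ w : n → ℝ, w ≠ 0 → w ⬝ᵥ M *ᵥ w < 0

lemma isStrictlyDissipative_neg_one [DecidableEq n] : IsStrictlyDissipative (-1 : Matrix n n ℝ) :=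
  fun w hw => by simpa [Matrix.neg_mulVec] using dotProduct_star_self_pos_iff.mpr hw

lemma IsStrictlyDissipative.dotProduct_mulVec_nonpos {M : Matrix n n ℝ}
    (hM : IsStrictlyDissipative M) (w : n → ℝ) : w ⬝ᵥ M *ᵥ w ≤ 0 := by
  rcases eq_or_ne w 0 with rfl | hw
  · simp
  · exact (hM w hw).le

theorem IsStrictlyDissipative.isStableMat [DecidableEq n] {M : Matrix n n ℝ}
    (hM : IsStrictlyDissipative M) : IsStableMat M := by
  refine isStableMat_of_lyapunov (C := -(M + Mᵀ)) .one ?_ (by simp)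
  refine .of_dotProduct_mulVec_pos ?_ fun w hw => ?_
  · simp [Matrix.IsHermitian, add_comm]
  · simp only [star_trivial, Matrix.neg_mulVec, Matrix.add_mulVec, dotProduct_neg, dotProduct_add,
      dotProduct_transpose_mulVec]
    linarith [hM w hw]

lemma trace_transpose_mul_mul (M X : Matrix n n ℝ) :
    (Xᵀ * M * X).trace = ∑ j, Xᵀ j ⬝ᵥ M *ᵥ Xᵀ j := by
  simp only [Matrix.trace, Matrix.diag, Matrix.mul_apply, dotProduct, Matrix.mulVec,
    Matrix.transpose_apply, Finset.sum_mul, Finset.mul_sum]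
  refine Finset.sum_congr rfl fun j _ => Finset.sum_comm.trans ?_
  refine Finset.sum_congr rfl fun k _ => Finset.sum_congr rfl fun l _ => by ring

lemma IsStrictlyDissipative.trace_transpose_mul_mul_neg {M X : Matrix n n ℝ}
    (hM : IsStrictlyDissipative M) (hX : X ≠ 0) : (Xᵀ * M * X).trace < 0 := by
  obtain ⟨j, hj⟩ : ∃ j, Xᵀ j ≠ 0 := by
    by_contra! h
    exact hX (Matrix.transpose_eq_zero.mp (funext h))
  rw [trace_transpose_mul_mul]
  exact Finset.sum_neg' (fun k _ => hM.dotProduct_mulVec_nonpos _)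
    ⟨j, Finset.mem_univ _, hM _ hj⟩

theorem IsStrictlyDissipative.eq_zero_of_lyapunov {M X : Matrix n n ℝ}
    (hM : IsStrictlyDissipative M) (hX : M * X + X * Mᵀ = 0) : X = 0 := by
  by_contra hX0
  have hcycle : (Xᵀ * (X * Mᵀ)).trace = (X * M * Xᵀ).trace := by
    rw [← Matrix.trace_transpose, Matrix.transpose_mul, Matrix.transpose_mul,
      Matrix.transpose_transpose, Matrix.transpose_transpose, Matrix.trace_mul_comm,
      Matrix.mul_assoc]
  have hsplit :
      (Xᵀ * (M * X + X * Mᵀ)).trace = (Xᵀ * M * X).trace + (Xᵀᵀ * M * Xᵀ).trace := by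
    rw [Matrix.mul_add, Matrix.trace_add, ← Matrix.mul_assoc, hcycle, Matrix.transpose_transpose]
  rw [hX, Matrix.mul_zero, Matrix.trace_zero] at hsplit
  linarith [hM.trace_transpose_mul_mul_neg hX0,
    hM.trace_transpose_mul_mul_neg (mt Matrix.transpose_eq_zero.mp hX0)]

lemma smul_dotProduct_mulVec_smul (M : Matrix n n ℝ) (c : ℝ) (w : n → ℝ) :
    (c • w) ⬝ᵥ M *ᵥ (c • w) = c ^ 2 * (w ⬝ᵥ M *ᵥ w) := by
  simp only [Matrix.mulVec_smul, smul_dotProduct, dotProduct_smul, smul_eq_mul]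
  ring

theorem isOpen_setOf_isStrictlyDissipative :
    IsOpen {M : Matrix n n ℝ | IsStrictlyDissipative M} := by
  refine isOpen_iff_mem_nhds.mpr fun M hM => ?_
  have hcont : Continuous fun q : Matrix n n ℝ × (n → ℝ) => q.2 ⬝ᵥ q.1 *ᵥ q.2 :=
    continuous_snd.dotProduct (continuous_fst.matrix_mulVec continuous_snd)
  have hsphere :
      ∀ᶠ N in nhds M, ∀ w ∈ Metric.sphere (0 : n → ℝ) 1, w ⬝ᵥ N *ᵥ w < 0 :=
    (isCompact_sphere 0 1).eventually_forall_of_forall_eventually fun w hw =>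
      hcont.continuousAt.eventually_lt continuousAt_const
        (hM w (ne_zero_of_mem_unit_sphere ⟨w, hw⟩))
  filter_upwards [hsphere] with N hN w hw
  have hw' : ‖w‖⁻¹ • w ∈ Metric.sphere (0 : n → ℝ) 1 := by
    simp [norm_smul, norm_ne_zero_iff.mpr hw]
  have := hN _ hw'
  rw [smul_dotProduct_mulVec_smul] at this
  exact neg_of_mul_neg_right this (sq_nonneg _)

end Dissipative

section Treks

variable {n : Type*}

def HasTrek (E : Set (n × n)) (i j : n) : Prop :=
  ∃ t : n, Relation.ReflTransGen (fun a b : n => (a, b) ∈ E) t i ∧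
    Relation.ReflTransGen (fun a b : n => (a, b) ∈ E) t j

variable {E : Set (n × n)}

lemma HasTrek.refl (i : n) : HasTrek E i i :=
  ⟨i, .refl, .refl⟩

lemma HasTrek.symm {i j : n} (h : HasTrek E i j) : HasTrek E j i :=
  let ⟨t, hi, hj⟩ := h
  ⟨t, hj, hi⟩

lemma HasTrek.tail {k i j : n} (h : HasTrek E k j) (hki : (k, i) ∈ E) : HasTrek E i j :=
  let ⟨t, hk, hj⟩ := h
  ⟨t, hk.tail hki, hj⟩

variable [Fintype n]

lemma lyapunov_apply_eq_zero_of_not_hasTrek {M X : Matrix n n ℝ} (hM : InSupp E M)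
    (hX : ∀ i j, ¬ HasTrek E i j → X i j = 0) {i j : n} (hij : ¬ HasTrek E i j) :
    (M * X + X * Mᵀ) i j = 0 := by
  have hleft (k : n) : M i k * X k j = 0 := by
    by_cases hki : (k, i) ∈ E
    · rw [hX k j fun h => hij (h.tail hki), mul_zero]
    · rw [hM k i hki, zero_mul]
  have hright (k : n) : X i k * Mᵀ k j = 0 := by
    by_cases hkj : (k, j) ∈ E
    · rw [hX i k fun h => hij (h.symm.tail hkj).symm, zero_mul]
    · rw [Matrix.transpose_apply, hM k j hkj, mul_zero]
  simp only [Matrix.add_apply, Matrix.mul_apply, hleft, hright, Finset.sum_const_zero, add_zero]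

variable (E) in
def trekSymmetricMatrices : Submodule ℝ (Matrix n n ℝ) where
  carrier := {X | Xᵀ = X ∧ ∀ i j, ¬ HasTrek E i j → X i j = 0}
  add_mem' := fun ⟨hA, hA'⟩ ⟨hB, hB'⟩ =>
    ⟨by rw [Matrix.transpose_add, hA, hB], fun i j h => by simp [hA' i j h, hB' i j h]⟩
  zero_mem' := ⟨Matrix.transpose_zero, fun _ _ _ => rfl⟩
  smul_mem' := fun c _ ⟨hA, hA'⟩ =>
    ⟨by rw [Matrix.transpose_smul, hA], fun i j h => by simp [hA' i j h]⟩

lemma lyapunov_mem_trekSymmetricMatrices {M X : Matrix n n ℝ} (hM : InSupp E M)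
    (hX : X ∈ trekSymmetricMatrices E) : M * X + X * Mᵀ ∈ trekSymmetricMatrices E := by
  refine ⟨?_, fun i j => lyapunov_apply_eq_zero_of_not_hasTrek hM hX.2⟩
  rw [Matrix.transpose_add, Matrix.transpose_mul, Matrix.transpose_mul, Matrix.transpose_transpose,
    hX.1, add_comm]

variable (M : Matrix n n ℝ) in
def lyapunovMap : Matrix n n ℝ →ₗ[ℝ] Matrix n n ℝ where
  toFun X := M * X + X * Mᵀ
  map_add' X Y := by simp only [Matrix.mul_add, Matrix.add_mul]; abel
  map_smul' c X := by simp only [Matrix.mul_smul, Matrix.smul_mul, smul_add, RingHom.id_apply]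

theorem mem_trekSymmetricMatrices_of_lyapunov {M S C : Matrix n n ℝ}
    (hdiss : IsStrictlyDissipative M) (hM : InSupp E M) (hC : C ∈ trekSymmetricMatrices E)
    (h : M * S + S * Mᵀ + C = 0) : S ∈ trekSymmetricMatrices E := by
  have hinj : Function.Injective (lyapunovMap M) := by
    rw [← LinearMap.ker_eq_bot, LinearMap.ker_eq_bot']
    exact fun X hX => hdiss.eq_zero_of_lyapunov hX
  let L := (lyapunovMap M).restrict fun X hX => lyapunov_mem_trekSymmetricMatrices hM hX
  have hL : Function.Surjective L := LinearMap.surjective_of_injective fun X Y hXY =>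
    Subtype.ext (hinj (congrArg Subtype.val hXY))
  obtain ⟨Y, hY⟩ := hL ⟨-C, neg_mem hC⟩
  have hSY : S = Y := hinj <| (eq_neg_of_add_eq_zero_left h).trans (congrArg Subtype.val hY).symm
  exact hSY ▸ Y.2

end Treks

section EdgeParameters

variable {p : ℕ} (E : Finset (Fin p × Fin p))

def edgeMatrixₗ : (E → ℝ) →ₗ[ℝ] Matrix (Fin p) (Fin p) ℝ where
  toFun := edgeMatrix E
  map_add' f g := by ext j i; by_cases h : (i, j) ∈ E <;> simp [edgeMatrix, h]
  map_smul' c f := by ext j i; by_cases h : (i, j) ∈ E <;> simp [edgeMatrix, h]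

lemma inSupp_edgeMatrix (f : E → ℝ) : InSupp (E : Set (Fin p × Fin p)) (edgeMatrix E f) :=
  fun _ _ h => dif_neg h

lemma edgeMatrix_injective : Function.Injective (edgeMatrix E) := by
  intro f g h
  funext ⟨⟨i, j⟩, he⟩
  simpa [edgeMatrix, he] using congrFun (congrFun h j) i

lemma continuous_edgeMatrix : Continuous (edgeMatrix E) :=
  (edgeMatrixₗ E).continuous_of_finiteDimensional

lemma edgeMatrix_eq_neg_one (hloops : ∀ i, (i, i) ∈ E) :
    edgeMatrix E (fun e => if e.1.1 = e.1.2 then -1 else 0) = -1 := by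
  ext j i
  by_cases hij : i = j
  · subst hij; simp [edgeMatrix, hloops]
  · by_cases h : (i, j) ∈ E <;> simp [edgeMatrix, h, hij, Ne.symm hij]

open Classical in
noncomputable def trekPairs : Finset (Fin p × Fin p) :=
  {q | q.1 ≤ q.2 ∧ HasTrek (E : Set (Fin p × Fin p)) q.1 q.2}

lemma eq_zero_of_mem_trekSymmetricMatrices {X : Matrix (Fin p) (Fin p) ℝ}
    (hX : X ∈ trekSymmetricMatrices (E : Set (Fin p × Fin p)))
    (h0 : ∀ q ∈ trekPairs E, X q.1 q.2 = 0) : X = 0 := by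
  ext i j
  by_cases hij : HasTrek (E : Set (Fin p × Fin p)) i j
  · rcases le_total i j with hle | hle
    · exact h0 (i, j) (by simp [trekPairs, hle, hij])
    · rw [← hX.1]
      exact h0 (j, i) (by simp [trekPairs, hle, hij.symm])
  · exact hX.2 i j hij

theorem exists_edgeMatrix_ne_zero_lyapunov_eq_zero {S : Matrix (Fin p) (Fin p) ℝ}
    (hS : S ∈ trekSymmetricMatrices (E : Set (Fin p × Fin p)))
    (hcard : (trekPairs E).card < E.card) :
    ∃ f : E → ℝ, edgeMatrix E f ≠ 0 ∧
      edgeMatrix E f * S + S * (edgeMatrix E f)ᵀ = 0 := by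
  let Θ : (E → ℝ) →ₗ[ℝ] (trekPairs E → ℝ) :=
    { toFun f q := (edgeMatrixₗ E f * S + S * (edgeMatrixₗ E f)ᵀ) q.1.1 q.1.2
      map_add' f g := by ext q; simp [Matrix.add_mul, Matrix.mul_add]; ring
      map_smul' c f := by ext q; simp [mul_add] }
  have hker : LinearMap.ker Θ ≠ ⊥ := LinearMap.ker_ne_bot_of_finrank_lt <| by
    simpa only [Module.finrank_fintype_fun_eq_card, Fintype.card_coe] using hcard
  obtain ⟨f, hf, hf0⟩ := Submodule.exists_mem_ne_zero_of_ne_bot hker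
  refine ⟨f, fun h => hf0 <| edgeMatrix_injective E <| h.trans (map_zero (edgeMatrixₗ E)).symm,
    ?_⟩
  exact eq_zero_of_mem_trekSymmetricMatrices E
    (lyapunov_mem_trekSymmetricMatrices (inSupp_edgeMatrix E f) hS)
    fun q hq => congrFun (LinearMap.mem_ker.mp hf) ⟨q, hq⟩

end EdgeParameters

lemma card_filter_fst_le_snd (p : ℕ) :
    (Finset.univ.filter fun q : Fin p × Fin p => q.1 ≤ q.2).card = p * (p + 1) / 2 := by
  rw [Finset.card_filter, Fintype.sum_prod_type_right]
  simp only [Finset.sum_boole, Nat.cast_id, Finset.filter_ge_eq_Iic, Fin.card_Iic]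
  rw [Fin.sum_univ_eq_sum_range (· + 1), ← add_zero (∑ i ∈ Finset.range p, (i + 1)),
    ← Finset.sum_range_succ' (fun i => i), Finset.sum_range_id, Nat.add_sub_cancel, mul_comm]

open Classical in
lemma card_trekPairs_add_ncard_not_hasTrek {p : ℕ} (E : Finset (Fin p × Fin p)) :
    (trekPairs E).card +
      {q : Fin p × Fin p | q.1 < q.2 ∧ ¬ HasTrek (E : Set (Fin p × Fin p)) q.1 q.2}.ncard =
      p * (p + 1) / 2 := by
  have hlt : {q : Fin p × Fin p | q.1 < q.2 ∧ ¬ HasTrek (E : Set (Fin p × Fin p)) q.1 q.2} =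
      ↑(Finset.univ.filter fun q : Fin p × Fin p =>
        q.1 ≤ q.2 ∧ ¬ HasTrek (E : Set (Fin p × Fin p)) q.1 q.2) := by
    ext q
    simp only [Set.mem_ofPred_eq, Finset.coe_filter, Finset.mem_univ, true_and, lt_iff_le_and_ne]
    exact ⟨fun ⟨⟨hle, _⟩, h⟩ => ⟨hle, h⟩,
      fun ⟨hle, h⟩ => ⟨⟨hle, fun heq => h (heq ▸ HasTrek.refl _)⟩, h⟩⟩
  rw [hlt, Set.ncard_coe_finset, trekPairs, ← card_filter_fst_le_snd, ← Finset.filter_filter,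
    ← Finset.filter_filter, Finset.card_filter_add_card_filter_not]

theorem fiber_ne_singleton {p : ℕ} {E : Finset (Fin p × Fin p)}
    {C M : Matrix (Fin p) (Fin p) ℝ} (hC : C.PosDef)
    (hCE : C ∈ trekSymmetricMatrices (E : Set (Fin p × Fin p)))
    (hdiss : IsStrictlyDissipative M) (hM : InSupp (E : Set (Fin p × Fin p)) M)
    (hcard : (trekPairs E).card < E.card) : Fiber (E : Set (Fin p × Fin p)) C M ≠ {M} := by
  intro hfib
  obtain ⟨-, -, S, hS, hMS, -⟩ : M ∈ Fiber (E : Set (Fin p × Fin p)) C M := hfib ▸ rfl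
  obtain ⟨f, hK, hKS⟩ := exists_edgeMatrix_ne_zero_lyapunov_eq_zero E
    (mem_trekSymmetricMatrices_of_lyapunov hdiss hM hCE hMS) hcard
  have hMK : (M + edgeMatrix E f) * S + S * (M + edgeMatrix E f)ᵀ + C = 0 := calc
    _ = (M * S + S * Mᵀ + C) + (edgeMatrix E f * S + S * (edgeMatrix E f)ᵀ) := by
      rw [Matrix.transpose_add, Matrix.add_mul, Matrix.mul_add]; abel
    _ = 0 := by rw [hMS, hKS, add_zero]
  have hmem : M + edgeMatrix E f ∈ Fiber (E : Set (Fin p × Fin p)) C M :=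
    ⟨fun i j h => by rw [Matrix.add_apply, hM i j h, inSupp_edgeMatrix E f i j h, add_zero],
      isStableMat_of_lyapunov hS hC hMK, S, hS, hMS, hMK⟩
  rw [hfib] at hmem
  exact hK (add_eq_left.mp hmem)

/-- for diagonal positive definite `C`, generic identifiability implies
`|E| ≤ p(p+1)/2 − N`, where `N` is the number of unordered pairs of vertices with no
trek between them. -/
theorem generic_identifiability_edge_bound {p : ℕ}
    (E : Finset (Fin p × Fin p)) (hloops : ∀ i : Fin p, (i, i) ∈ E)
    (C : Matrix (Fin p) (Fin p) ℝ) (hC : C.PosDef)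
    (hdiag : ∀ i j : Fin p, i ≠ j → C i j = 0)
    (hgen : GenericallyIdentifiable E C) :
    E.card +
      {q : Fin p × Fin p | q.1 < q.2 ∧
        ¬ ∃ t : Fin p,
          Relation.ReflTransGen (fun a b : Fin p => (a, b) ∈ E) t q.1 ∧
          Relation.ReflTransGen (fun a b : Fin p => (a, b) ∈ E) t q.2}.ncard
      ≤ p * (p + 1) / 2 := by
  have hcount := card_trekPairs_add_ncard_not_hasTrek E
  simp only [HasTrek, Finset.mem_coe] at hcount
  suffices E.card ≤ (trekPairs E).card by omega
  by_contra! hcard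
  have hCE : C ∈ trekSymmetricMatrices (E : Set (Fin p × Fin p)) :=
    ⟨hC.isHermitian, fun i j h => hdiag i j fun hij => h (hij ▸ .refl i)⟩
  let U := {f : E → ℝ | IsStrictlyDissipative (edgeMatrix E f)}
  have hU : IsOpen U := isOpen_setOf_isStrictlyDissipative.preimage (continuous_edgeMatrix E)
  have hU₀ : (fun e : E => if e.1.1 = e.1.2 then (-1 : ℝ) else 0) ∈ U := by
    simpa only [U, Set.mem_ofPred_eq, edgeMatrix_eq_neg_one E hloops] using
      isStrictlyDissipative_neg_one
  refine (hU.measure_pos volume ⟨_, hU₀⟩).ne' (measure_mono_null (fun f hf => ?_) hgen)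
  exact ⟨hf.isStableMat, fiber_ne_singleton hC hCE hf (inSupp_edgeMatrix E f) hcard⟩
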